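/- For every constant c₀ > 0, the transmission-energy function t ↦ t·f(c₀/t), where f(x) = N₀·(2^{x/B} − 1), is strictly decreasing on (0, ∞). -/

import Mathlib

/-!
The energy is the perspective `t ↦ t f(c₀/t)` of the strictly convex function
`f x = N₀ (2^{x/B} - 1)`, which vanishes at `0`. Writing `x = c₀/t`, it equals `c₀` times the
slope `(f x - f 0)/x` of the chord from the origin; that slope strictly increases with `x` by
strict convexity, while `x` strictly decreases with `t`.
-/

open Real Set

theorem StrictConvexOn.const_mul {s : Set ℝ} {f : ℝ → ℝ} (hf : StrictConvexOn ℝ s f) {c : ℝ}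
    (hc : 0 < c) : StrictConvexOn ℝ s fun x => c * f x := by
  refine ⟨hf.1, fun x hx y hy hxy a b ha hb hab => ?_⟩
  have h := mul_lt_mul_of_pos_left (hf.2 hx hy hxy ha hb hab) hc
  simp only [smul_eq_mul] at h ⊢
  linarith

theorem strictConvexOn_rpow_left {b : ℝ} (hb : 1 < b) :
    StrictConvexOn ℝ univ fun x : ℝ => b ^ x := by
  have hlog : 0 < log b := log_pos hb
  refine ⟨convex_univ, fun x _ y _ hxy a c ha hc hac => ?_⟩
  simp only [rpow_def_of_pos (zero_lt_one.trans hb), smul_eq_mul]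
  calc exp (log b * (a * x + c * y)) = exp (a * (log b * x) + c * (log b * y)) := by ring_nf
    _ < a * exp (log b * x) + c * exp (log b * y) :=
      strictConvexOn_exp.2 trivial trivial (by simpa [hlog.ne'] using hxy) ha hc hac

theorem StrictConvexOn.strictAntiOn_mul_comp_div {f : ℝ → ℝ} (hf : StrictConvexOn ℝ (Ici 0) f)
    (hf0 : f 0 = 0) {c : ℝ} (hc : 0 < c) :
    StrictAntiOn (fun t => t * f (c / t)) (Ioi 0) := by
  intro s (hs : 0 < s) t (ht : 0 < t) hst
  have hslope := hf.secant_strict_mono (a := 0) self_mem_Ici (div_pos hc ht).le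
    (div_pos hc hs).le (div_pos hc ht).ne' (div_pos hc hs).ne' (div_lt_div_of_pos_left hc hs hst)
  simp only [hf0, sub_zero, div_div_eq_mul_div] at hslope
  have := (div_lt_div_iff_of_pos_right hc).1 hslope
  show t * f (c / t) < s * f (c / s)
  linarith [mul_comm t (f (c / t)), mul_comm s (f (c / s))]

/-- For every constant `c₀ > 0`, the transmission-energy function
`t ↦ t f(c₀/t)`, with `f(x) = N₀(2^{x/B}−1)`, is strictly decreasing on `(0, ∞)`. -/
theorem transmission_energy_decreasing_in_time
    (N0 B : ℝ) (hN0 : 0 < N0) (hB : 0 < B) :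
    ∀ c₀ : ℝ, 0 < c₀ →
      StrictAntiOn (fun t : ℝ => t * (N0 * ((2 : ℝ) ^ (c₀ / t / B) - 1))) (Ioi 0) := by
  intro c₀ hc₀
  have hbase : 1 < (2 : ℝ) ^ B⁻¹ := one_lt_rpow one_lt_two (inv_pos.2 hB)
  have hconv : StrictConvexOn ℝ (Ici 0) fun x : ℝ => N0 * ((2 : ℝ) ^ (x / B) - 1) := by
    refine (((strictConvexOn_rpow_left hbase).add_const (-1)).const_mul hN0).subset
      (subset_univ _) (convex_Ici 0) |>.congr fun x _ => ?_
    simp only [Pi.add_apply, ← rpow_mul zero_le_two, ← sub_eq_add_neg, div_eq_inv_mul]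
  exact hconv.strictAntiOn_mul_comp_div (by simp) hc₀
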